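/- arXiv:1606.00706 — 6 statements merged into one kernel-verified Lean document; each statement's English description precedes it below -/
import Mathlib

section
/- Let s ≥ 0, b ≥ 1, b_0 ≥ 0 be integers and let (a_n)_{n≥0} be a sequence of rational numbers. Assume: (i) there exist a real number Δ > 1 and positive integers δ_n with δ_n ≤ Δ^{n+1} and δ_n·a_n ∈ ℤ for all n ≥ 0; and (ii) there exists p_0 such that for every prime p ≥ p_0 and every n ≥ 0 with a_n ≠ 0, one has v_p(a_n) ≥ −s·v_p(D_{bn+b_0}). Then there exists a positive integer C such that D_{bn+b_0}^s · C^{n+1} · a_n ∈ ℤ for all n ≥ 0. -/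
/-!
At a prime `p ≥ p₀` the valuation hypothesis bounds `v_p(den aₙ)` by `s · v_p(D (b n + b₀))`.
At the finitely many primes `p < p₀` one only knows `den aₙ ∣ δₙ ≤ Δ^(n+1) ≤ 2^(K(n+1))` for
`2^K > Δ`, hence `v_p(den aₙ) ≤ K(n+1)`; this is absorbed by `C^(n+1)` with `C = p₀!^K`, since
every such `p` divides `p₀!`.
-/

/-- `D n = lcm {1, 2, …, n}`, with `D 0 = 1`. -/
def D (n : ℕ) : ℕ := (Finset.Icc 1 n).lcm id

open Nat

theorem D_ne_zero (n : ℕ) : D n ≠ 0 := by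
  simp [D, Finset.lcm_eq_zero_iff]

theorem Rat.den_dvd_iff_exists_int {q : ℚ} {d : ℕ} : q.den ∣ d ↔ ∃ m : ℤ, (d : ℚ) * q = m := by
  constructor
  · rintro ⟨k, rfl⟩
    exact ⟨k * q.num, by push_cast; rw [mul_right_comm, Rat.den_mul_eq_num, mul_comm]⟩
  · rintro ⟨m, hm⟩
    rcases eq_or_ne d 0 with rfl | hd
    · exact dvd_zero _
    have hq : q = Rat.divInt m d := by
      rw [Rat.divInt_eq_div, ← hm]; push_cast; field_simp
    exact_mod_cast hq ▸ Rat.den_dvd m d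

theorem Nat.factorization_le_of_le_two_pow {n p e : ℕ} (hn : n ≤ 2 ^ e) : n.factorization p ≤ e := by
  rcases p.lt_or_ge 2 with hp | hp
  · interval_cases p <;> simp
  · exact Nat.factorization_le_of_le_pow (hn.trans (Nat.pow_le_pow_left hp e))

theorem Rat.factorization_den_le_of_neg_le_padicValRat {q : ℚ} {p k : ℕ} (hp : p.Prime)
    (h : -(k : ℤ) ≤ padicValRat p q) : q.den.factorization p ≤ k := by
  by_cases hpd : p ∣ q.den
  · have hnum : padicValInt p q.num = 0 := by
      refine padicValInt.eq_zero_of_not_dvd fun hpn => hp.not_dvd_one ?_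
      exact q.reduced ▸ Nat.dvd_gcd (Int.natCast_dvd.1 hpn) hpd
    rw [padicValRat_def, hnum] at h
    rw [Nat.factorization_def _ hp]
    omega
  · simp [Nat.factorization_eq_zero_of_not_dvd hpd]

theorem Rat.den_dvd_mul_factorial_pow_of_factorization_le {q : ℚ} {M p₀ K e : ℕ} (hM : M ≠ 0)
    (hden : q.den ≤ 2 ^ (K * e))
    (hlarge : ∀ p, p.Prime → p₀ ≤ p → q.den.factorization p ≤ M.factorization p) :
    q.den ∣ M * (p₀ ! ^ K) ^ e := by
  rw [← Nat.factorization_prime_le_iff_dvd q.den_nz (by positivity)]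
  intro p hp
  rw [← pow_mul, Nat.factorization_mul hM (by positivity), Nat.factorization_pow,
    Finsupp.add_apply, Finsupp.smul_apply, smul_eq_mul]
  rcases le_or_gt p₀ p with hp₀ | hp₀
  · exact (hlarge p hp hp₀).trans le_self_add
  · have hfact : 0 < (p₀ !).factorization p :=
      hp.factorization_pos_of_dvd p₀.factorial_ne_zero (hp.dvd_factorial.2 hp₀.le)
    calc q.den.factorization p ≤ K * e := Nat.factorization_le_of_le_two_pow hden
      _ ≤ K * e * (p₀ !).factorization p := Nat.le_mul_of_pos_right _ hfact
      _ ≤ _ := le_add_self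

theorem denominators_from_large_primes_general (s b b₀ : ℕ) (a : ℕ → ℚ)
    (Δ : ℝ) (hΔ : 1 < Δ) (δ : ℕ → ℕ) (hδpos : ∀ n, 0 < δ n)
    (hδle : ∀ n, (δ n : ℝ) ≤ Δ ^ (n + 1))
    (hδint : ∀ n, ∃ m : ℤ, (δ n : ℚ) * a n = (m : ℚ))
    (p₀ : ℕ)
    (hval : ∀ p : ℕ, p.Prime → p₀ ≤ p → ∀ n : ℕ, a n ≠ 0 →
      -(s : ℤ) * padicValNat p (D (b * n + b₀)) ≤ padicValRat p (a n)) :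
    ∃ C : ℕ, 0 < C ∧ ∀ n : ℕ, ∃ m : ℤ,
      (D (b * n + b₀) : ℚ) ^ s * (C : ℚ) ^ (n + 1) * a n = (m : ℚ) := by
  obtain ⟨K, hK⟩ := pow_unbounded_of_one_lt Δ one_lt_two
  refine ⟨p₀ ! ^ K, by positivity, fun n => ?_⟩
  have hden : (a n).den ≤ 2 ^ (K * (n + 1)) := by
    have hδ : (δ n : ℝ) ≤ 2 ^ (K * (n + 1)) := by
      rw [pow_mul]
      exact (hδle n).trans (pow_le_pow_left₀ (zero_le_one.trans hΔ.le) hK.le _)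
    exact (Nat.le_of_dvd (hδpos n) (Rat.den_dvd_iff_exists_int.2 (hδint n))).trans
      (by exact_mod_cast hδ)
  have hlarge : ∀ p, p.Prime → p₀ ≤ p →
      (a n).den.factorization p ≤ (D (b * n + b₀) ^ s).factorization p := by
    intro p hp hp₀
    rcases eq_or_ne (a n) 0 with ha | ha
    · simp [ha]
    refine Rat.factorization_den_le_of_neg_le_padicValRat hp ?_
    rw [Nat.factorization_pow, Finsupp.smul_apply, smul_eq_mul, Nat.factorization_def _ hp]
    simpa using hval p hp hp₀ n ha
  obtain ⟨m, hm⟩ := Rat.den_dvd_iff_exists_int.1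
    (Rat.den_dvd_mul_factorial_pow_of_factorization_le (pow_ne_zero s (D_ne_zero _)) hden hlarge)
  exact ⟨m, by simpa using hm⟩

/-- If a sequence of rationals `aₙ` has denominators bounded by `Δ^(n+1)` and satisfies
`v_p(aₙ) ≥ −s·v_p(D (b*n+b₀))` for all primes `p ≥ p₀`, then there exists a positive
integer `C` such that `D (b*n+b₀)^s · C^(n+1) · aₙ ∈ ℤ` for all `n`. -/
theorem denominators_from_large_primes (s b b₀ : ℕ) (hb : 1 ≤ b) (a : ℕ → ℚ)
    (Δ : ℝ) (hΔ : 1 < Δ) (δ : ℕ → ℕ) (hδpos : ∀ n, 0 < δ n)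
    (hδle : ∀ n, (δ n : ℝ) ≤ Δ ^ (n + 1))
    (hδint : ∀ n, ∃ m : ℤ, (δ n : ℚ) * a n = (m : ℚ))
    (p₀ : ℕ)
    (hval : ∀ p : ℕ, p.Prime → p₀ ≤ p → ∀ n : ℕ, a n ≠ 0 →
      -(s : ℤ) * padicValNat p (D (b * n + b₀)) ≤ padicValRat p (a n)) :
    ∃ C : ℕ, 0 < C ∧ ∀ n : ℕ, ∃ m : ℤ,
      (D (b * n + b₀) : ℚ) ^ s * (C : ℚ) ^ (n + 1) * a n = (m : ℚ) :=
  denominators_from_large_primes_general s b b₀ a Δ hΔ δ hδpos hδle hδint p₀ hval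
end

section
/- Let (a_n)_{n≥0} and (b_n)_{n≥0} be sequences of algebraic numbers, and let s, t ≥ 0 and b, b', C, C' ≥ 1 be integers such that D_{bn}^s · C^{n+1} · a_n and D_{b'n}^t · C'^{n+1} · b_n are algebraic integers for all n ≥ 0. Then, setting b'' = max(b, b'), for every n ≥ 0 the number D_{b''n}^{s+t} · (C·C')^{n+1} · (Σ_{k=0}^n a_k·b_{n−k}) is an algebraic integer. In particular the Cauchy product of the two sequences again has denominators of the same shape, with exponent s + t. -/
lemma natCast_isIntegral (m : ℕ) : IsIntegral ℤ (m : ℂ) := by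
  simpa using isIntegral_algebraMap (R := ℤ) (A := ℂ) (x := (m : ℤ))

lemma D_dvd_D {m n : ℕ} (h : m ≤ n) : D m ∣ D n := by
  apply Finset.lcm_dvd
  intro x hx
  exact Finset.dvd_lcm (Finset.Icc_subset_Icc_right h hx)

/-- Multiplicativity `𝒢ₛ·𝒢ₜ ⊆ 𝒢_{s+t}`: if `D (b*n)^s · C^(n+1) · aₙ` and
`D (b'*n)^t · C'^(n+1) · bₙ` are algebraic integers for all `n`, then with `b'' = max b b'`,
for every `n` the number `D (b''*n)^(s+t) · (C*C')^(n+1) · Σ_{k=0}^n aₖ·b_{n−k}` is an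
algebraic integer. -/
theorem cauchy_product_denominators (a b : ℕ → ℂ) (s t bb bb' C C' : ℕ)
    (hbb : 1 ≤ bb) (hbb' : 1 ≤ bb') (hC : 1 ≤ C) (hC' : 1 ≤ C')
    (ha : ∀ n : ℕ, IsIntegral ℤ ((D (bb * n) : ℂ) ^ s * (C : ℂ) ^ (n + 1) * a n))
    (hb : ∀ n : ℕ, IsIntegral ℤ ((D (bb' * n) : ℂ) ^ t * (C' : ℂ) ^ (n + 1) * b n)) :
    ∀ n : ℕ, IsIntegral ℤ ((D (max bb bb' * n) : ℂ) ^ (s + t) * ((C : ℂ) * C') ^ (n + 1) *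
      ∑ k ∈ Finset.range (n + 1), a k * b (n - k)) := by
  intro n
  rw [Finset.mul_sum]
  apply IsIntegral.sum
  intro k hk
  have hkn : k ≤ n := Nat.lt_succ_iff.mp (Finset.mem_range.mp hk)
  obtain ⟨q1, hq1⟩ : D (bb * k) ∣ D (max bb bb' * n) :=
    D_dvd_D (Nat.mul_le_mul (le_max_left _ _) hkn)
  obtain ⟨q2, hq2⟩ : D (bb' * (n - k)) ∣ D (max bb bb' * n) :=
    D_dvd_D (Nat.mul_le_mul (le_max_right _ _) (Nat.sub_le _ _))
  have key : (D (max bb bb' * n) : ℂ) ^ (s + t) * ((C : ℂ) * C') ^ (n + 1) *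
      (a k * b (n - k)) =
      (q1 : ℂ) ^ s * (q2 : ℂ) ^ t * (C : ℂ) ^ (n - k) * (C' : ℂ) ^ k *
      ((D (bb * k) : ℂ) ^ s * (C : ℂ) ^ (k + 1) * a k) *
      ((D (bb' * (n - k)) : ℂ) ^ t * (C' : ℂ) ^ ((n - k) + 1) * b (n - k)) := by
    have e1 : (D (max bb bb' * n) : ℂ) = (D (bb * k) : ℂ) * q1 := by exact_mod_cast hq1
    have e2 : (D (max bb bb' * n) : ℂ) = (D (bb' * (n - k)) : ℂ) * q2 := by exact_mod_cast hq2
    have eC : (C : ℂ) ^ (n + 1) = (C : ℂ) ^ (k + 1) * (C : ℂ) ^ (n - k) := by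
      rw [← pow_add]; congr 1; omega
    have eC' : (C' : ℂ) ^ (n + 1) = (C' : ℂ) ^ ((n - k) + 1) * (C' : ℂ) ^ k := by
      rw [← pow_add]; congr 1; omega
    rw [pow_add, mul_pow, eC, eC']
    nth_rewrite 1 [e1]
    rw [e2]
    ring
  rw [key]
  exact ((((((IsIntegral.pow (natCast_isIntegral q1) s).mul
    (IsIntegral.pow (natCast_isIntegral q2) t)).mul
    (IsIntegral.pow (natCast_isIntegral C) (n - k))).mul
    (IsIntegral.pow (natCast_isIntegral C') k)).mul (ha k)).mul (hb (n - k)))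
end

section
/- Let s ≥ 1 be an integer. Then: (1) for every n ≥ 1, n^s divides D_n^s, so that the polylogarithm Li_s(z) = Σ_{n≥1} z^n/n^s belongs to the filtration level 𝒢_s; but (2) there do NOT exist positive integers b and C such that n^s divides D_{bn}^{s−1} · C^{n+1} for every n ≥ 1; consequently Li_s does not belong to 𝒢_{s−1}. -/
/-- The coefficient sequence of the polylogarithm `Li_s(z) = Σ_{n≥1} zⁿ/nˢ`. -/
noncomputable def liCoeff (s : ℕ) (n : ℕ) : ℚ := if n = 0 then 0 else 1 / (n : ℚ) ^ s

/-!
Since `n ∣ D n`, `nˢ ∣ D nˢ`, so `D nˢ · liCoeff s n` is an integer. Conversely, for a prime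
`p > max b C` we have `b p < p²`, so `p` divides `D (b p) = lcm {1, …, b p}` at most once and
`p` occurs in `D (b p)^(s-1) · C^(p+1)` only to the power `s - 1 < s`, and `n = p` violates
`nˢ ∣ D (b n)^(s-1) · C^(n+1)`.
-/

theorem D_eq_lcmUpto : D = Nat.lcmUpto := rfl

theorem dvd_D {k n : ℕ} (hk : 1 ≤ k) (hkn : k ≤ n) : k ∣ D n :=
  Finset.dvd_lcm (Finset.mem_Icc.mpr ⟨hk, hkn⟩)

theorem factorization_D_mul_le_one {p b : ℕ} (hp : p.Prime) (hb : b < p) :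
    (D (b * p)).factorization p ≤ 1 := by
  rw [D_eq_lcmUpto, Nat.factorization_lcmUpto _ hp]
  exact Nat.lt_succ_iff.mp <| Nat.log_lt_of_lt_pow' two_ne_zero <| by nlinarith [hp.pos]

theorem not_pow_dvd_D_mul_pow_pred {p b s : ℕ} (hp : p.Prime) (hb : b < p) (hs : 1 ≤ s) :
    ¬ p ^ s ∣ D (b * p) ^ (s - 1) := by
  rw [hp.pow_dvd_iff_le_factorization (pow_ne_zero _ (D_eq_lcmUpto ▸ Nat.lcmUpto_ne_zero _)),
    Nat.factorization_pow, Finsupp.smul_apply, smul_eq_mul, not_le]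
  calc (s - 1) * (D (b * p)).factorization p ≤ (s - 1) * 1 :=
        Nat.mul_le_mul_left _ (factorization_D_mul_le_one hp hb)
    _ < s := by omega

theorem not_forall_pow_dvd_D_pow_pred_mul_pow {s : ℕ} (hs : 1 ≤ s) (b : ℕ) {C : ℕ}
    (hC : 0 < C) :
    ¬ ∀ n : ℕ, 1 ≤ n → n ^ s ∣ D (b * n) ^ (s - 1) * C ^ (n + 1) := by
  intro h
  obtain ⟨p, hbC, hp⟩ := Nat.exists_infinite_primes (max b C + 1)
  have hpC : (p ^ s).Coprime (C ^ (p + 1)) :=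
    .pow _ _ <| (hp.coprime_iff_not_dvd).mpr fun hd => by have := Nat.le_of_dvd hC hd; omega
  exact not_pow_dvd_D_mul_pow_pred hp (by omega) hs <|
    hpC.dvd_of_dvd_mul_right (h p hp.one_le)

theorem liCoeff_of_ne_zero (s : ℕ) {n : ℕ} (hn : n ≠ 0) : liCoeff s n = 1 / (n : ℚ) ^ s :=
  if_neg hn

theorem exists_intCast_eq_mul_liCoeff_iff {s n : ℕ} (hn : n ≠ 0) (N : ℕ) :
    (∃ m : ℤ, (N : ℚ) * liCoeff s n = m) ↔ n ^ s ∣ N := by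
  have hns : ((n : ℚ) ^ s) ≠ 0 := pow_ne_zero _ (Nat.cast_ne_zero.mpr hn)
  simp only [liCoeff_of_ne_zero s hn, mul_one_div, div_eq_iff hns]
  constructor
  · rintro ⟨m, hm⟩
    rw [← Int.natCast_dvd_natCast]
    exact ⟨m, by push_cast; exact_mod_cast hm.trans (mul_comm _ _)⟩
  · rintro ⟨k, rfl⟩
    exact ⟨k, by push_cast; ring⟩

/-- For `s ≥ 1`: (1) `nˢ ∣ D nˢ` for all `n ≥ 1`, so `Li_s ∈ 𝒢ₛ`; but (2) there are no
positive integers `b`, `C` with `nˢ ∣ D (b*n)^(s−1) · C^(n+1)` for all `n ≥ 1`, and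
consequently `Li_s ∉ 𝒢_{s−1}`. -/
theorem polylog_filtration (s : ℕ) (hs : 1 ≤ s) :
    (∀ n : ℕ, 1 ≤ n → n ^ s ∣ D n ^ s) ∧
    (∃ b C : ℕ, 0 < b ∧ 0 < C ∧ ∀ n : ℕ, ∃ m : ℤ,
        (D (b * n) : ℚ) ^ s * (C : ℚ) ^ (n + 1) * liCoeff s n = (m : ℚ)) ∧
    (¬ ∃ b C : ℕ, 0 < b ∧ 0 < C ∧ ∀ n : ℕ, 1 ≤ n →
        n ^ s ∣ D (b * n) ^ (s - 1) * C ^ (n + 1)) ∧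
    (¬ ∃ b C : ℕ, 0 < b ∧ 0 < C ∧ ∀ n : ℕ, ∃ m : ℤ,
        (D (b * n) : ℚ) ^ (s - 1) * (C : ℚ) ^ (n + 1) * liCoeff s n = (m : ℚ)) := by
  have hLi : ∀ n : ℕ, 1 ≤ n → n ^ s ∣ D n ^ s := fun n hn =>
    pow_dvd_pow_of_dvd (dvd_D hn le_rfl) s
  have hNotLi : ¬ ∃ b C : ℕ, 0 < b ∧ 0 < C ∧ ∀ n : ℕ, 1 ≤ n →
      n ^ s ∣ D (b * n) ^ (s - 1) * C ^ (n + 1) :=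
    fun ⟨b, C, _, hC, h⟩ => not_forall_pow_dvd_D_pow_pred_mul_pow hs b hC h
  refine ⟨hLi, ⟨1, 1, one_pos, one_pos, fun n => ?_⟩, hNotLi, ?_⟩
  · rcases Nat.eq_zero_or_pos n with rfl | hn
    · exact ⟨0, by simp [liCoeff]⟩
    · simpa using (exists_intCast_eq_mul_liCoeff_iff (s := s) hn.ne' (D n ^ s)).mpr (hLi n hn)
  · rintro ⟨b, C, hb, hC, h⟩
    refine hNotLi ⟨b, C, hb, hC, fun n hn => ?_⟩
    rw [← exists_intCast_eq_mul_liCoeff_iff (by omega)]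
    simpa using h n
end

section
/- The Apéry numbers a_n = Σ_{k=0}^n (n choose k)² · ((n+k) choose k)² satisfy, for every integer n ≥ 0, the linear recurrence (n+2)³·a_{n+2} − (34n³ + 153n² + 231n + 117)·a_{n+1} + (n+1)³·a_n = 0. -/
/-- The Apéry numbers `aₙ = Σ_{k=0}^n (n choose k)² ((n+k) choose k)²`. -/
def apery (n : ℕ) : ℤ :=
  ∑ k ∈ Finset.range (n + 1), ((n.choose k : ℤ)) ^ 2 * (((n + k).choose k : ℤ)) ^ 2

/-!
Creative telescoping (Zeilberger). With `b n k = C(n,k) C(n+k,k)`, the recurrence operator applied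
to the summand `b n k ^ 2` is the backward difference in `k` of the certificate
`G n k = 4 (2n+3) (k (2k+1) - (2n+3)²) b (n+1) k ^ 2`. Summing over `k` leaves the boundary term
`G n (n+2)`, which vanishes because `b (n+1) (n+2) = 0`.
-/

open Finset

def aperyBinom (n k : ℕ) : ℤ := n.choose k * (n + k).choose k

def aperyCertificate (n k : ℕ) : ℤ :=
  4 * (2 * n + 3) * (k * (2 * k + 1) - (2 * n + 3) ^ 2) * aperyBinom (n + 1) k ^ 2

theorem aperyBinom_eq_zero_of_lt {n k : ℕ} (h : n < k) : aperyBinom n k = 0 := by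
  simp [aperyBinom, Nat.choose_eq_zero_of_lt h]

theorem aperyBinom_succ_right_mul (n k : ℕ) :
    aperyBinom n (k + 1) * (k + 1) ^ 2 = aperyBinom n k * (n - k) * (n + k + 1) := by
  rcases lt_or_ge n k with hnk | hkn
  · simp [aperyBinom_eq_zero_of_lt hnk, aperyBinom_eq_zero_of_lt (Nat.lt_succ_of_lt hnk)]
  have hn : (n.choose (k + 1) : ℤ) * (k + 1) = n.choose k * (n - k) := by
    exact_mod_cast Nat.choose_succ_right_eq n k
  have hnk : ((n + k + 1 : ℕ) : ℤ) * (n + k).choose k = (n + k + 1).choose (k + 1) * (k + 1) := by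
    exact_mod_cast Nat.add_one_mul_choose_eq (n + k) k
  simp only [aperyBinom, ← add_assoc]
  push_cast at hnk
  linear_combination ((n + k + 1).choose (k + 1) : ℤ) * (k + 1) * hn
    - (n.choose k : ℤ) * (n - k) * hnk

theorem aperyBinom_succ_left_mul (n k : ℕ) :
    aperyBinom (n + 1) k * (n + 1 - k) = aperyBinom n k * (n + k + 1) := by
  rcases lt_or_ge (n + 1) k with hnk | hkn
  · simp [aperyBinom_eq_zero_of_lt hnk, aperyBinom_eq_zero_of_lt (Nat.lt_of_succ_lt hnk)]
  have hn : ((n + 1).choose k : ℤ) * (n + 1 - k) = n.choose k * (n + 1) := by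
    exact_mod_cast (Nat.choose_mul_succ_eq n k).symm
  have hnk : ((n + k).choose k : ℤ) * (n + k + 1) = (n + k + 1).choose k * (n + 1) := by
    have h := Nat.choose_mul_succ_eq (n + k) k
    rw [show n + k + 1 - k = n + 1 by omega] at h
    exact_mod_cast h
  refine mul_left_cancel₀ (show ((n : ℤ) + 1) ≠ 0 by positivity) ?_
  simp only [aperyBinom, Nat.add_right_comm n 1 k]
  linear_combination ((n + k + 1).choose k : ℤ) * (n + 1) * hn - (n.choose k : ℤ) * (n + 1) * hnk

theorem aperyRecurrence_term_zero (n : ℕ) :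
    ((n : ℤ) + 2) ^ 3 * aperyBinom (n + 2) 0 ^ 2
      - (34 * (n : ℤ) ^ 3 + 153 * (n : ℤ) ^ 2 + 231 * (n : ℤ) + 117) * aperyBinom (n + 1) 0 ^ 2
      + ((n : ℤ) + 1) ^ 3 * aperyBinom n 0 ^ 2 = aperyCertificate n 0 := by
  simp only [aperyCertificate, aperyBinom, Nat.choose_zero_right]
  push_cast
  ring

/-- The three values `aperyBinom m (k + 1)`, `m = n, n+1, n+2`, are polynomial multiples of
`aperyBinom (n + 1) k / (k + 1) ^ 2`; after multiplying by `(k + 1) ^ 4` the identity is polynomial. -/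
theorem aperyRecurrence_term_succ (n k : ℕ) :
    ((n : ℤ) + 2) ^ 3 * aperyBinom (n + 2) (k + 1) ^ 2
      - (34 * (n : ℤ) ^ 3 + 153 * (n : ℤ) ^ 2 + 231 * (n : ℤ) + 117) * aperyBinom (n + 1) (k + 1) ^ 2
      + ((n : ℤ) + 1) ^ 3 * aperyBinom n (k + 1) ^ 2
      = aperyCertificate n (k + 1) - aperyCertificate n k := by
  set t := aperyBinom (n + 1) k
  have h0 : aperyBinom n (k + 1) * (k + 1) ^ 2 = t * (n + 1 - k) * (n - k) := by
    linear_combination aperyBinom_succ_right_mul n k - (n - k : ℤ) * aperyBinom_succ_left_mul n k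
  have h1 : aperyBinom (n + 1) (k + 1) * (k + 1) ^ 2 = t * (n + 1 - k) * (n + k + 2) := by
    have h := aperyBinom_succ_right_mul (n + 1) k
    push_cast at h
    linear_combination h
  have h2 : aperyBinom (n + 2) (k + 1) * (k + 1) ^ 2 = t * (n + k + 2) * (n + k + 3) := by
    have h := aperyBinom_succ_right_mul (n + 2) k
    have h' := aperyBinom_succ_left_mul (n + 1) k
    push_cast at h h'
    linear_combination h + (n + k + 3 : ℤ) * h'
  refine mul_left_cancel₀ (show ((k : ℤ) + 1) ^ 4 ≠ 0 by positivity) ?_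
  simp only [aperyCertificate]
  push_cast
  linear_combination
    ((n : ℤ) + 2) ^ 3 * (aperyBinom (n + 2) (k + 1) * (k + 1) ^ 2 + t * (n + k + 2) * (n + k + 3)) * h2
    - (34 * (n : ℤ) ^ 3 + 153 * (n : ℤ) ^ 2 + 231 * (n : ℤ) + 117
        + 4 * (2 * n + 3) * ((k + 1) * (2 * (k + 1) + 1) - (2 * n + 3) ^ 2))
      * (aperyBinom (n + 1) (k + 1) * (k + 1) ^ 2 + t * (n + 1 - k) * (n + k + 2)) * h1
    + ((n : ℤ) + 1) ^ 3 * (aperyBinom n (k + 1) * (k + 1) ^ 2 + t * (n + 1 - k) * (n - k)) * h0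

theorem sum_aperyRecurrence_term (n N : ℕ) :
    ∑ k ∈ range (N + 1), (((n : ℤ) + 2) ^ 3 * aperyBinom (n + 2) k ^ 2
      - (34 * (n : ℤ) ^ 3 + 153 * (n : ℤ) ^ 2 + 231 * (n : ℤ) + 117) * aperyBinom (n + 1) k ^ 2
      + ((n : ℤ) + 1) ^ 3 * aperyBinom n k ^ 2) = aperyCertificate n N := by
  induction N with
  | zero => simpa using aperyRecurrence_term_zero n
  | succ N ih => rw [sum_range_succ, ih, aperyRecurrence_term_succ]; ring

theorem apery_eq_sum_range_aperyBinom_sq {m N : ℕ} (h : m < N) :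
    apery m = ∑ k ∈ range N, aperyBinom m k ^ 2 := by
  calc apery m = ∑ k ∈ range (m + 1), aperyBinom m k ^ 2 := by simp only [apery, aperyBinom, mul_pow]
    _ = ∑ k ∈ range N, aperyBinom m k ^ 2 := sum_subset (range_subset_range.2 h) fun k _ hk => by
      rw [aperyBinom_eq_zero_of_lt (by simpa using hk), zero_pow two_ne_zero]

/-- The Apéry numbers satisfy Apéry's recurrence
`(n+2)³·a_{n+2} − (34n³+153n²+231n+117)·a_{n+1} + (n+1)³·aₙ = 0`. -/
theorem apery_recurrence (n : ℕ) :
    ((n : ℤ) + 2) ^ 3 * apery (n + 2)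
      - (34 * (n : ℤ) ^ 3 + 153 * (n : ℤ) ^ 2 + 231 * (n : ℤ) + 117) * apery (n + 1)
      + ((n : ℤ) + 1) ^ 3 * apery n = 0 := by
  rw [apery_eq_sum_range_aperyBinom_sq (m := n + 2) (N := n + 3) (by omega),
    apery_eq_sum_range_aperyBinom_sq (m := n + 1) (N := n + 3) (by omega),
    apery_eq_sum_range_aperyBinom_sq (m := n) (N := n + 3) (by omega),
    mul_sum, mul_sum, mul_sum, ← sum_sub_distrib, ← sum_add_distrib,
    sum_aperyRecurrence_term, aperyCertificate, aperyBinom_eq_zero_of_lt (by omega)]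
  ring
end

section
/- For every integer n ≥ 0, the rational number D_n³ · â_n is an integer, where â_n = Σ_{k=0}^n (n choose k)²((n+k) choose k)² · ( Σ_{m=1}^n 1/m³ + Σ_{m=1}^k (−1)^{m−1} / (2m³ · (n choose m) · ((n+m) choose n)) ). -/
/-- The second Apéry sequence
`âₙ = Σ_{k=0}^n (n choose k)²((n+k) choose k)²·(Σ_{m=1}^n 1/m³ +
Σ_{m=1}^k (−1)^{m−1}/(2m³ (n choose m)((n+m) choose n)))`. -/
def aperyHat (n : ℕ) : ℚ :=
  ∑ k ∈ Finset.range (n + 1), ((n.choose k : ℚ)) ^ 2 * (((n + k).choose k : ℚ)) ^ 2 *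
    ((∑ m ∈ Finset.Icc 1 n, 1 / (m : ℚ) ^ 3) +
     ∑ m ∈ Finset.Icc 1 k,
       (-1 : ℚ) ^ (m - 1) / (2 * (m : ℚ) ^ 3 * (n.choose m : ℚ) * ((n + m).choose n : ℚ)))

namespace Nat

theorem factorization_choose_add_factorization_le_log {p k m : ℕ} (hp : p.Prime) (hm : m ≠ 0)
    (hmk : m ≤ k) : (k.choose m).factorization p + m.factorization p ≤ log p k := by
  -- Kummer: a carry at digit `i` of `m + (k - m)` is impossible when `p ^ i ∣ m`.
  have hdisj : Disjoint {i ∈ Finset.Ico 1 (log p k + 1) | p ^ i ≤ m % p ^ i + (k - m) % p ^ i}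
      {i ∈ Finset.Ico 1 (log p k + 1) | p ^ i ∣ m} := by
    simp +contextual [Finset.disjoint_right, dvd_iff_mod_eq_zero, Nat.mod_lt _ (pow_pos hp.pos _)]
  rw [factorization_choose hp hmk (lt_add_one _),
    factorization_eq_card_pow_dvd_of_lt hp (pos_of_ne_zero hm)
      (hmk.trans_lt (lt_pow_succ_log_self hp.one_lt k)),
    ← Finset.card_union_of_disjoint hdisj, Finset.filter_union_right]
  exact (Finset.card_filter_le _ _).trans_eq (card_Ico _ _)

theorem mul_choose_dvd_lcmUpto {k m : ℕ} (hm : m ≠ 0) (hmk : m ≤ k) :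
    m * k.choose m ∣ lcmUpto k := by
  rw [← factorization_prime_le_iff_dvd (mul_ne_zero hm (choose_ne_zero hmk)) (lcmUpto_ne_zero k)]
  intro p hp
  rw [factorization_mul hm (choose_ne_zero hmk), Finsupp.add_apply, add_comm,
    factorization_lcmUpto k hp]
  exact factorization_choose_add_factorization_le_log hp hm hmk

theorem two_dvd_choose_mul_choose_add {n k : ℕ} (hk : k ≠ 0) :
    2 ∣ n.choose k * (n + k).choose k := by
  rcases lt_or_ge n k with hnk | hkn
  · simp [choose_eq_zero_of_lt hnk]
  have h := choose_mul (n := n + k) (k := 2 * k) (s := k) (by omega)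
  rw [show n + k - k = n by omega, show 2 * k - k = k by omega] at h
  rw [mul_comm, ← h, ← centralBinom_eq_two_mul_choose]
  exact dvd_mul_of_dvd_right (two_dvd_centralBinom_of_one_le (pos_of_ne_zero hk)) _

theorem choose_dvd_choose_mul_choose (n : ℕ) {k m : ℕ} (hmk : m ≤ k) :
    n.choose m ∣ n.choose k * k.choose m :=
  (choose_mul hmk).symm ▸ dvd_mul_right _ _

theorem choose_add_dvd_choose_add_mul_choose (n : ℕ) {k m : ℕ} (hmk : m ≤ k) :
    (n + m).choose m ∣ (n + k).choose k * k.choose m := by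
  have h := choose_mul (n := n + k) (k := k) (s := k - m) (Nat.sub_le k m)
  rw [choose_symm hmk, show n + k - (k - m) = n + m by omega, show k - (k - m) = m by omega] at h
  exact h ▸ dvd_mul_left _ _

end Nat

theorem D_dvd_D_of_le {k n : ℕ} (hkn : k ≤ n) : D k ∣ D n :=
  Finset.lcm_mono (Finset.Icc_subset_Icc_right hkn)

theorem dvd_D_s14 {m n : ℕ} (hm : m ≠ 0) (hmn : m ≤ n) : m ∣ D n :=
  Finset.dvd_lcm (Finset.mem_Icc.mpr ⟨Nat.one_le_iff_ne_zero.mpr hm, hmn⟩)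

theorem two_mul_pow_three_mul_choose_mul_choose_dvd {n k m : ℕ} (hm : m ≠ 0) (hmk : m ≤ k)
    (hkn : k ≤ n) : 2 * m ^ 3 * n.choose m * (n + m).choose m ∣
      D n ^ 3 * n.choose k ^ 2 * (n + k).choose k ^ 2 := by
  have hD : m * k.choose m ∣ D n := (Nat.mul_choose_dvd_lcmUpto hm hmk).trans (D_dvd_D_of_le hkn)
  have h₁ : m * n.choose m ∣ n.choose k * D n := calc
    m * n.choose m ∣ m * (n.choose k * k.choose m) :=
      mul_dvd_mul_left m (Nat.choose_dvd_choose_mul_choose n hmk)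
    _ = n.choose k * (m * k.choose m) := by ring
    _ ∣ n.choose k * D n := mul_dvd_mul_left _ hD
  have h₂ : m * (n + m).choose m ∣ (n + k).choose k * D n := calc
    m * (n + m).choose m ∣ m * ((n + k).choose k * k.choose m) :=
      mul_dvd_mul_left m (Nat.choose_add_dvd_choose_add_mul_choose n hmk)
    _ = (n + k).choose k * (m * k.choose m) := by ring
    _ ∣ (n + k).choose k * D n := mul_dvd_mul_left _ hD
  have h₀ : 2 ∣ n.choose k * (n + k).choose k :=
    Nat.two_dvd_choose_mul_choose_add (by omega)
  calc 2 * m ^ 3 * n.choose m * (n + m).choose m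
      = 2 * (m * n.choose m) * (m * (n + m).choose m) * m := by ring
    _ ∣ n.choose k * (n + k).choose k * (n.choose k * D n) * ((n + k).choose k * D n) * D n :=
      mul_dvd_mul (mul_dvd_mul (mul_dvd_mul h₀ h₁) h₂) (dvd_of_mul_right_dvd hD)
    _ = D n ^ 3 * n.choose k ^ 2 * (n + k).choose k ^ 2 := by ring

theorem natCast_div_mem_bot {K : Type*} [DivisionRing K] [CharZero K] {a b : ℕ} (h : b ∣ a) :
    (a / b : K) ∈ (⊥ : Subring K) := by
  rw [← Nat.cast_div_charZero h]
  exact natCast_mem _ _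

/-- For every `n ≥ 0`, `D n ³ · âₙ` is an integer. -/
theorem Dn_cubed_mul_aperyHat_isInt (n : ℕ) :
    ∃ m : ℤ, (D n : ℚ) ^ 3 * aperyHat n = (m : ℚ) := by
  suffices h : (D n : ℚ) ^ 3 * aperyHat n ∈ (⊥ : Subring ℚ) by
    obtain ⟨m, hm⟩ := Subring.mem_bot.mp h
    exact ⟨m, hm.symm⟩
  rw [aperyHat, Finset.mul_sum]
  refine Subring.sum_mem _ fun k hk => ?_
  have hkn : k ≤ n := Nat.lt_succ_iff.mp (Finset.mem_range.mp hk)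
  simp only [mul_add, Finset.mul_sum]
  refine add_mem (Subring.sum_mem _ fun m hm => ?_) (Subring.sum_mem _ fun m hm => ?_)
  all_goals obtain ⟨hm₁, hmk⟩ := Finset.mem_Icc.mp hm
  · have hdvd : m ^ 3 ∣ D n ^ 3 * n.choose k ^ 2 * (n + k).choose k ^ 2 :=
      ((pow_dvd_pow_of_dvd (dvd_D_s14 (by omega) hmk) 3).mul_right _).mul_right _
    convert natCast_div_mem_bot (K := ℚ) hdvd using 1
    push_cast
    ring
  · have hdvd := two_mul_pow_three_mul_choose_mul_choose_dvd (by omega) hmk hkn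
    have hsign : (-1 : ℚ) ^ (m - 1) ∈ (⊥ : Subring ℚ) :=
      pow_mem (neg_mem (one_mem _)) _
    convert mul_mem hsign (natCast_div_mem_bot (K := ℚ) hdvd) using 1
    rw [Nat.choose_symm_add (a := n) (b := m)]
    push_cast
    ring
end

section
/- The exponent 3 in the integrality statement 'D_n³·â_n ∈ ℤ' cannot be improved: for all positive integers b, b_0 and C there exists an integer n ≥ 0 such that D_{bn+b_0}² · C^{n+1} · â_n is not an integer, where â_n = Σ_{k=0}^n (n choose k)²((n+k) choose k)² · ( Σ_{m=1}^n 1/m³ + Σ_{m=1}^k (−1)^{m−1} / (2m³ · (n choose m) · ((n+m) choose n)) ). -/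
open Finset

namespace AperyHat

theorem sum_Icc_one_eq_sum_Icc_pred_add {M : Type*} [AddCommMonoid M] {n : ℕ} (hn : n ≠ 0)
    (f : ℕ → M) : ∑ m ∈ Icc 1 n, f m = ∑ m ∈ Icc 1 (n - 1), f m + f n := by
  obtain ⟨n, rfl⟩ := Nat.exists_eq_add_one_of_ne_zero hn
  exact sum_Icc_succ_top (by omega) f

def aperyWeight (n k : ℕ) : ℕ := n.choose k ^ 2 * (n + k).choose k ^ 2

def aperyTerm (n m : ℕ) : ℚ :=
  (-1) ^ (m - 1) / (2 * (m : ℚ) ^ 3 * n.choose m * (n + m).choose n)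

def aperyInner (n k : ℕ) : ℚ :=
  ∑ m ∈ Icc 1 n, 1 / (m : ℚ) ^ 3 + ∑ m ∈ Icc 1 k, aperyTerm n m

theorem aperyHat_eq_sum (n : ℕ) :
    aperyHat n = ∑ k ∈ range (n + 1), (aperyWeight n k : ℚ) * aperyInner n k := by
  simp [aperyHat, aperyWeight, aperyInner, aperyTerm]

theorem aperyInner_self {n : ℕ} (hn : n ≠ 0) :
    aperyInner n n = aperyInner n (n - 1) + aperyTerm n n := by
  rw [aperyInner, aperyInner, sum_Icc_one_eq_sum_Icc_pred_add hn (aperyTerm n), add_assoc]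

theorem cube_mul_aperyTerm_self {n : ℕ} (hn : Odd n) :
    (n : ℚ) ^ 3 * aperyTerm n n = 1 / (2 * (2 * n).choose n) := by
  have hn0 : (n : ℚ) ≠ 0 := by exact_mod_cast hn.pos.ne'
  rw [aperyTerm, (Nat.Odd.sub_odd hn odd_one).neg_one_pow, Nat.choose_self, Nat.cast_one,
    ← two_mul]
  field_simp

theorem cube_mul_aperyHat_sub_eq {n : ℕ} (hn : Odd n) :
    (n : ℚ) ^ 3 * aperyHat n
        - (∑ k ∈ range (n + 1), (aperyWeight n k : ℚ) + ((2 * n).choose n : ℚ) / 2)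
      = ∑ k ∈ range n, (aperyWeight n k : ℚ) * ((n : ℚ) ^ 3 * aperyInner n k - 1)
        + aperyWeight n n * ((n : ℚ) ^ 3 * aperyInner n (n - 1) - 1) := by
  set Q : ℚ := ((2 * n).choose n : ℚ)
  have hQ : Q ≠ 0 := Nat.cast_ne_zero.2 (Nat.choose_pos (by omega)).ne'
  have hweight : (aperyWeight n n : ℚ) = Q ^ 2 := by simp [Q, aperyWeight, ← two_mul]
  have hterm : (n : ℚ) ^ 3 * aperyTerm n n * (2 * Q) = 1 := by
    rw [cube_mul_aperyTerm_self hn]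
    exact one_div_mul_cancel (mul_ne_zero two_ne_zero hQ)
  have hsum : ∑ k ∈ range n, (aperyWeight n k : ℚ) * ((n : ℚ) ^ 3 * aperyInner n k - 1)
      = (n : ℚ) ^ 3 * ∑ k ∈ range n, (aperyWeight n k : ℚ) * aperyInner n k
        - ∑ k ∈ range n, (aperyWeight n k : ℚ) := by
    rw [mul_sum, ← sum_sub_distrib]
    exact sum_congr rfl fun k _ => by ring
  rw [aperyHat_eq_sum, sum_range_succ, sum_range_succ, aperyInner_self hn.pos.ne', hsum, hweight]
  linear_combination Q / 2 * hterm

section Padic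

variable {p : ℕ} [hp : Fact p.Prime]

theorem padicNorm_natCast_eq_zpow {n : ℕ} (hn : n ≠ 0) :
    padicNorm p n = (p : ℚ) ^ (-(n.factorization p : ℤ)) := by
  rw [padicNorm.eq_zpow_of_nonzero (Nat.cast_ne_zero.2 hn), padicValRat.of_nat,
    Nat.factorization_def n hp.out]

theorem inv_le_padicNorm_natCast {n : ℕ} (hn : n ≠ 0) (h : n.factorization p ≤ 1) :
    (p : ℚ)⁻¹ ≤ padicNorm p n := by
  rw [padicNorm_natCast_eq_zpow hn, ← zpow_neg_one]
  exact zpow_le_zpow_right₀ (by exact_mod_cast hp.out.one_le) (by omega)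

theorem padicNorm_D {N : ℕ} (hpN : p ≤ N) (hNp : N < p ^ 2) :
    padicNorm p (D N) = (p : ℚ)⁻¹ := by
  have hlog : (D N).factorization p = 1 := by
    rw [show D N = Nat.lcmUpto N from rfl, Nat.factorization_lcmUpto N hp.out,
      Nat.log_eq_one_iff]
    exact ⟨by rwa [← sq], hp.out.one_lt, hpN⟩
  rw [padicNorm_natCast_eq_zpow (n := D N) (Nat.lcmUpto_ne_zero N), hlog]
  simp

theorem inv_le_padicNorm_choose {n k : ℕ} (hk : k ≤ n) (hn : n < p ^ 2) :
    (p : ℚ)⁻¹ ≤ padicNorm p (n.choose k) :=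
  inv_le_padicNorm_natCast (Nat.choose_pos hk).ne' (Nat.factorization_choose_le_one hn)

theorem padicNorm_natCast_of_pos_of_lt {m : ℕ} (hm : 0 < m) (hmp : m < p) : padicNorm p m = 1 :=
  (padicNorm.nat_eq_one_iff m).2 fun h => (Nat.le_of_dvd hm h).not_gt hmp

theorem padicNorm_eq_of_padicNorm_sub_lt {x y : ℚ} (h : padicNorm p (x - y) < padicNorm p y) :
    padicNorm p x = padicNorm p y := by
  rw [← sub_add_cancel x y, padicNorm.add_eq_max_of_ne h.ne, max_eq_right h.le]

theorem padicNorm_two (hp2 : p ≠ 2) : padicNorm p 2 = 1 := by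
  simpa using padicNorm_natCast_of_pos_of_lt (p := p) two_pos (hp.out.two_le.lt_of_ne' hp2)

theorem padicNorm_natCast_mul_lt_one (n : ℕ) {x : ℚ} (hx : padicNorm p x < 1) :
    padicNorm p (n * x) < 1 := by
  rw [padicNorm.mul]
  exact mul_lt_one_of_nonneg_of_lt_one_right (padicNorm.of_nat n) (padicNorm.nonneg x) hx

theorem padicNorm_cube_mul_aperyTerm_lt_one (hp2 : p ≠ 2) {m : ℕ} (hm : 0 < m) (hmp : m < p) :
    padicNorm p ((p : ℚ) ^ 3 * aperyTerm p m) < 1 := by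
  have hp1 : (1 : ℚ) < p := by exact_mod_cast hp.out.one_lt
  have hC₁ := inv_le_padicNorm_choose (p := p) hmp.le (by nlinarith [hp.out.two_le])
  have hC₂ := inv_le_padicNorm_choose (p := p) (Nat.le_add_right p m)
    (by nlinarith [hp.out.two_le])
  simp only [aperyTerm, padicNorm.mul, padicNorm.div, IsAbsoluteValue.abv_pow (padicNorm p),
    padicNorm.neg, padicNorm.one, padicNorm_two hp2, padicNorm_natCast_of_pos_of_lt hm hmp,
    padicNorm.padicNorm_p_of_prime, one_pow, one_mul]
  calc _ ≤ (p : ℚ)⁻¹ ^ 3 * (1 / ((p : ℚ)⁻¹ * (p : ℚ)⁻¹)) := by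
        gcongr
        exact padicNorm.nonneg _
    _ = (p : ℚ)⁻¹ := by field_simp
    _ < 1 := inv_lt_one_of_one_lt₀ hp1

theorem padicNorm_cube_mul_aperyInner_sub_one_lt_one (hp2 : p ≠ 2) {k : ℕ} (hk : k < p) :
    padicNorm p ((p : ℚ) ^ 3 * aperyInner p k - 1) < 1 := by
  have hp0 : (p : ℚ) ≠ 0 := by exact_mod_cast hp.out.ne_zero
  have hsplit : (p : ℚ) ^ 3 * aperyInner p k - 1
      = ∑ m ∈ Icc 1 (p - 1), (p : ℚ) ^ 3 * (1 / m ^ 3)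
        + ∑ m ∈ Icc 1 k, (p : ℚ) ^ 3 * aperyTerm p m := by
    rw [aperyInner, sum_Icc_one_eq_sum_Icc_pred_add hp.out.ne_zero, ← mul_sum, ← mul_sum]
    field_simp
    ring
  rw [hsplit]
  refine padicNorm.nonarchimedean.trans_lt (max_lt (padicNorm.sum_lt' ?_ one_pos)
    (padicNorm.sum_lt' ?_ one_pos))
  · intro m hm
    have hmp : m < p := by grind
    simp only [padicNorm.mul, padicNorm.div, IsAbsoluteValue.abv_pow (padicNorm p),
      padicNorm.one, padicNorm.padicNorm_p_of_prime, padicNorm_natCast_of_pos_of_lt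
      (mem_Icc.1 hm).1 hmp, one_pow, div_one, mul_one]
    exact pow_lt_one₀ (by positivity) (inv_lt_one_of_one_lt₀ (by exact_mod_cast hp.out.one_lt))
      (by norm_num)
  · intro m hm
    exact padicNorm_cube_mul_aperyTerm_lt_one hp2 (mem_Icc.1 hm).1 (by grind)

theorem padicNorm_cube_mul_aperyHat_sub_lt_one (hp2 : p ≠ 2) :
    padicNorm p ((p : ℚ) ^ 3 * aperyHat p
      - (∑ k ∈ range (p + 1), (aperyWeight p k : ℚ) + ((2 * p).choose p : ℚ) / 2)) < 1 := by
  rw [cube_mul_aperyHat_sub_eq (hp.out.odd_of_ne_two hp2)]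
  refine padicNorm.nonarchimedean.trans_lt
    (max_lt (padicNorm.sum_lt' (fun k hk => ?_) one_pos) ?_)
  · exact padicNorm_natCast_mul_lt_one _
      (padicNorm_cube_mul_aperyInner_sub_one_lt_one hp2 (mem_range.1 hk))
  · exact padicNorm_natCast_mul_lt_one _
      (padicNorm_cube_mul_aperyInner_sub_one_lt_one hp2 (Nat.sub_lt hp.out.pos one_pos))

theorem choose_two_mul_self_cast_zmod : (((2 * p).choose p : ℕ) : ZMod p) = 2 := by
  have hlucas := Choose.choose_modEq_choose_mod_mul_choose_div_nat (n := 2 * p) (k := p) (p := p)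
  rw [Nat.mul_mod_left, Nat.mod_self, Nat.mul_div_cancel _ hp.out.pos,
    Nat.div_self hp.out.pos] at hlucas
  rw [(ZMod.natCast_eq_natCast_iff _ _ _).2 hlucas]
  norm_num

theorem sum_aperyWeight_cast_zmod : ∑ k ∈ range (p + 1), (aperyWeight p k : ZMod p) = 5 := by
  have hmiddle : ∀ k ∈ range p, k ≠ 0 → (aperyWeight p k : ZMod p) = 0 := fun k hk hk0 => by
    rw [ZMod.natCast_eq_zero_iff, aperyWeight]
    exact dvd_mul_of_dvd_left
      (dvd_pow (hp.out.dvd_choose_self hk0 (mem_range.1 hk)) two_ne_zero) _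
  rw [sum_range_succ, sum_eq_single_of_mem 0 (mem_range.2 hp.out.pos) hmiddle]
  simp only [aperyWeight, Nat.choose_zero_right, Nat.choose_self, ← two_mul]
  push_cast
  rw [choose_two_mul_self_cast_zmod]
  norm_num

theorem not_dvd_two_mul_sum_aperyWeight_add (hp5 : 5 ≤ p) :
    ¬ p ∣ 2 * ∑ k ∈ range (p + 1), aperyWeight p k + (2 * p).choose p := by
  rw [← ZMod.natCast_eq_zero_iff]
  push_cast
  rw [sum_aperyWeight_cast_zmod, choose_two_mul_self_cast_zmod]
  intro h12
  have hdvd : p ∣ 4 * 3 := (ZMod.natCast_eq_zero_iff _ p).1 (by exact_mod_cast h12)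
  rcases hp.out.dvd_mul.1 hdvd with h | h <;> have := Nat.le_of_dvd (by norm_num) h <;> omega

theorem padicNorm_aperyHat (hp5 : 5 ≤ p) : padicNorm p (aperyHat p) = (p : ℚ) ^ 3 := by
  have hp2 : p ≠ 2 := by omega
  have hmain : padicNorm p
      (∑ k ∈ range (p + 1), (aperyWeight p k : ℚ) + ((2 * p).choose p : ℚ) / 2) = 1 := by
    have hnum := (padicNorm.nat_eq_one_iff _).2 (not_dvd_two_mul_sum_aperyWeight_add hp5)
    have hhalf : ∑ k ∈ range (p + 1), (aperyWeight p k : ℚ) + ((2 * p).choose p : ℚ) / 2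
        = ((2 * ∑ k ∈ range (p + 1), aperyWeight p k + (2 * p).choose p : ℕ) : ℚ) / 2 := by
      push_cast
      ring
    rw [hhalf, padicNorm.div, hnum, padicNorm_two hp2, div_one]
  have hcube := padicNorm_eq_of_padicNorm_sub_lt
    (hmain ▸ padicNorm_cube_mul_aperyHat_sub_lt_one hp2)
  rw [hmain, padicNorm.mul, IsAbsoluteValue.abv_pow (padicNorm p),
    padicNorm.padicNorm_p_of_prime, inv_pow, inv_mul_eq_one₀ (by positivity)] at hcube
  exact hcube.symm

end Padic

end AperyHat

open AperyHat in
theorem aperyHat_exponent_sharp_general (b b₀ C : ℕ) (hb : 0 < b) (hC : 0 < C) :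
    ∃ n : ℕ, ¬ ∃ m : ℤ, (D (b * n + b₀) : ℚ) ^ 2 * (C : ℚ) ^ (n + 1) * aperyHat n = (m : ℚ) := by
  obtain ⟨p, hp_large, hp⟩ := Nat.exists_infinite_primes (b + b₀ + C + 5)
  have : Fact p.Prime := ⟨hp⟩
  refine ⟨p, fun ⟨m, hm⟩ => ?_⟩
  have hD : padicNorm p (D (b * p + b₀)) = (p : ℚ)⁻¹ :=
    padicNorm_D (by nlinarith) (by nlinarith)
  have hC' : padicNorm p C = 1 := padicNorm_natCast_of_pos_of_lt hC (by omega)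
  have hm_norm : padicNorm p m = p := by
    rw [← hm, padicNorm.mul, padicNorm.mul, IsAbsoluteValue.abv_pow (padicNorm p),
      IsAbsoluteValue.abv_pow (padicNorm p), hD, hC', padicNorm_aperyHat (by omega), one_pow]
    field_simp
  have hp_one : (1 : ℚ) < p := by exact_mod_cast hp.one_lt
  exact (hm_norm ▸ padicNorm.of_int m).not_gt hp_one

/-- The exponent `3` in `D n ³ · âₙ ∈ ℤ` cannot be improved to `2`: for all positive
integers `b`, `b₀`, `C` there is an `n` with `D (b*n+b₀)² · C^(n+1) · âₙ ∉ ℤ`. -/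
theorem aperyHat_exponent_sharp (b b₀ C : ℕ) (hb : 0 < b) (hb₀ : 0 < b₀) (hC : 0 < C) :
    ∃ n : ℕ, ¬ ∃ m : ℤ, (D (b * n + b₀) : ℚ) ^ 2 * (C : ℚ) ^ (n + 1) * aperyHat n = (m : ℚ) :=
  aperyHat_exponent_sharp_general b b₀ C hb hC
end
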